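/- arXiv:2510.20492 — 5 statements merged into one kernel-verified Lean document; each statement's English description precedes it below -/
import Mathlib

section
/- For all real constants 0 < c₀ ≤ 1 ≤ C₀ there exists a constant C₁ > 0 such that the following holds. Let ε ∈ (0,1], let G₁, G₂ ∈ [c₀, C₀], let δ ∈ [0, 1/2] with δ ≤ C₀·ε, and let K ∈ (0, C₀·ε]. Define g(s,t) := (2π·√(G₁·G₂·(1−δ²)))⁻¹ · exp( −(1/(2(1−δ²))) · ( s²/G₁ − 2δ·s·t/√(G₁·G₂) + t²/G₂ ) ) for s,t ∈ ℝ, and for a,b > 0 set p(a,b) := (a·b)^(−1/2) · g(√(2a), √(2b)) · (1 − exp(−4·√(a·b)·K)) and p̄(a,b) := K · √(2/(π·G₁))·exp(−a/G₁) · √(2/(π·G₂))·exp(−b/G₂). Then for all a, b ∈ (0, 1/ε]: | p(a,b)/p̄(a,b) − 1 | ≤ C₁ · (a·b + 1) · ε. -/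
/-! With `x = 4 √(ab) K` and `E = (2δ√(ab)/√(G₁G₂) - δ²(a/G₁ + b/G₂)) / (1 - δ²)`, the quotient
factors exactly as `p / p̄ = (1 - e^{-x}) / x · (1 - δ²)^{-1/2} · e^E`, and each factor is within
`O((ab + 1) ε)` of `1`: `1 - (1 - e^{-x}) / x ≤ x`, `(1 - δ²)^{-1/2} - 1 ≤ δ²`, and, because
`δ, K ≤ C₀ ε` while `a, b ≤ 1/ε`, the exponent satisfies `|E| ≤ M · min 1 ((ab + 1) ε)` with
`M = M(c₀, C₀)`; the `min` keeps `e^{|E|} ≤ e^M` bounded, so `|e^E - 1| ≤ |E| e^{|E|}` is also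
`O((ab + 1) ε)`. -/

/-- The joint Gaussian density `g(s,t)` with variances `G₁, G₂` and correlation `δ`. -/
noncomputable def gdens (G₁ G₂ δ s t : ℝ) : ℝ :=
  (2 * Real.pi * Real.sqrt (G₁ * G₂ * (1 - δ ^ 2)))⁻¹ *
    Real.exp (-(1 / (2 * (1 - δ ^ 2))) *
      (s ^ 2 / G₁ - 2 * δ * s * t / Real.sqrt (G₁ * G₂) + t ^ 2 / G₂))

/-- The density `p(a,b)`. -/
noncomputable def pdens (G₁ G₂ δ K a b : ℝ) : ℝ :=
  (a * b) ^ (-(1 : ℝ) / 2) * gdens G₁ G₂ δ (Real.sqrt (2 * a)) (Real.sqrt (2 * b)) *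
    (1 - Real.exp (-4 * Real.sqrt (a * b) * K))

/-- The product density `p̄(a,b)`. -/
noncomputable def pbar (G₁ G₂ K a b : ℝ) : ℝ :=
  K * (Real.sqrt (2 / (Real.pi * G₁)) * Real.exp (-a / G₁)) *
    (Real.sqrt (2 / (Real.pi * G₂)) * Real.exp (-b / G₂))

open Real

lemma abs_mul_mul_sub_one_le (x y z : ℝ) :
    |x * y * z - 1| ≤ |x| * |y| * |z - 1| + |x| * |y - 1| + |x - 1| :=
  calc |x * y * z - 1| = |x * y * (z - 1) + x * (y - 1) + (x - 1)| := by ring_nf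
    _ ≤ |x * y * (z - 1)| + |x * (y - 1)| + |x - 1| := abs_add_three _ _ _
    _ = |x| * |y| * |z - 1| + |x| * |y - 1| + |x - 1| := by simp only [abs_mul]

lemma Real.abs_exp_sub_one_le_abs_mul_exp_abs (x : ℝ) : |exp x - 1| ≤ |x| * exp |x| := by
  rcases le_total 0 x with hx | hx
  · rw [abs_of_nonneg hx, abs_of_nonneg (by linarith [add_one_le_exp x])]
    have : exp (-x) * exp x = 1 := by rw [← exp_add, neg_add_cancel, exp_zero]
    nlinarith [add_one_le_exp (-x), exp_pos x]
  · rw [abs_of_nonpos hx, abs_of_nonpos (by simpa using exp_le_exp.2 hx)]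
    nlinarith [add_one_le_exp x, one_le_exp (neg_nonneg.2 hx)]

lemma abs_one_sub_exp_neg_div_self_le_one {x : ℝ} (hx : 0 < x) : |(1 - exp (-x)) / x| ≤ 1 := by
  have hexp : exp (-x) ≤ 1 := exp_le_one_iff.2 (neg_nonpos.2 hx.le)
  rw [abs_div, abs_of_pos hx, div_le_one hx, abs_of_nonneg (sub_nonneg.2 hexp)]
  linarith [add_one_le_exp (-x)]

lemma abs_one_sub_exp_neg_div_self_sub_one_le {x : ℝ} (hx : 0 < x) :
    |(1 - exp (-x)) / x - 1| ≤ x := by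
  have hF : (1 - exp (-x)) / x ≤ 1 := (abs_le.1 (abs_one_sub_exp_neg_div_self_le_one hx)).2
  have hlow : x * (1 - x) ≤ 1 - exp (-x) := by
    have : exp (-x) * exp x = 1 := by rw [← exp_add, neg_add_cancel, exp_zero]
    nlinarith [mul_le_mul_of_nonneg_left (add_one_le_exp x) (exp_pos (-x)).le,
      mul_le_mul_of_nonneg_left (add_one_le_exp (-x)) hx.le]
  rw [abs_of_nonpos (by linarith), neg_sub, sub_le_comm, le_div_iff₀ hx]
  linarith

lemma abs_inv_sqrt_one_sub_sub_one_le {u : ℝ} (hu0 : 0 ≤ u) (hu : u ≤ 1 / 2) :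
    |(√(1 - u))⁻¹ - 1| ≤ u := by
  have hpos : 0 < √(1 - u) := sqrt_pos.2 (by linarith)
  have hle : √(1 - u) ≤ 1 := sqrt_le_one.2 (by linarith)
  have hmul : 1 ≤ √(1 - u) * (1 + u) := by
    rw [← sqrt_sq (by linarith : 0 ≤ 1 + u), ← sqrt_mul (by linarith)]
    exact one_le_sqrt.2 (by nlinarith [mul_nonneg hu0 (show 0 ≤ 1 - u - u ^ 2 by nlinarith)])
  rw [abs_of_nonneg (sub_nonneg.2 (one_le_inv₀ hpos |>.2 hle)), sub_le_iff_le_add',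
    inv_le_iff_one_le_mul₀' hpos]
  linarith

lemma pbar_eq {G₁ G₂ : ℝ} (hG₁ : 0 < G₁) (hG₂ : 0 < G₂) (K a b : ℝ) :
    pbar G₁ G₂ K a b = 2 * K / (π * √(G₁ * G₂)) * exp (-a / G₁ - b / G₂) := by
  have hsqrt : √(2 / (π * G₁)) * √(2 / (π * G₂)) = 2 / (π * √(G₁ * G₂)) := by
    rw [← sqrt_mul (by positivity), ← sqrt_sq (by positivity : 0 ≤ 2 / (π * √(G₁ * G₂))),
      div_pow, mul_pow, sq_sqrt (by positivity)]
    congr 1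
    field_simp
  rw [pbar, mul_comm 2 K, mul_div_assoc, ← hsqrt, sub_eq_add_neg, exp_add, neg_div G₂ b]
  ring

lemma gdens_sqrt_two_mul {G₁ G₂ δ a b : ℝ} (hG₁ : 0 < G₁) (hG₂ : 0 < G₂) (hδ : δ ^ 2 < 1)
    (ha : 0 ≤ a) (hb : 0 ≤ b) :
    gdens G₁ G₂ δ √(2 * a) √(2 * b) = (2 * π * √(G₁ * G₂) * √(1 - δ ^ 2))⁻¹ *
      exp (-a / G₁ - b / G₂ +
        (2 * δ * √(a * b) / √(G₁ * G₂) - δ ^ 2 * (a / G₁ + b / G₂)) / (1 - δ ^ 2)) := by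
  have hδ' : 1 - δ ^ 2 ≠ 0 := by linarith
  have hcross : √(2 * a) * √(2 * b) = 2 * √(a * b) := by
    rw [← sqrt_mul (by positivity), show 2 * a * (2 * b) = 2 ^ 2 * (a * b) by ring,
      sqrt_mul (by positivity), sqrt_sq zero_le_two]
  rw [gdens, sqrt_mul (by positivity), ← mul_assoc, sq_sqrt (by positivity),
    sq_sqrt (by positivity), mul_assoc (2 * δ), hcross]
  congr 2
  field_simp
  ring

lemma pdens_div_pbar {G₁ G₂ δ K a b : ℝ} (hG₁ : 0 < G₁) (hG₂ : 0 < G₂) (hδ : δ ^ 2 < 1)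
    (hK : 0 < K) (ha : 0 < a) (hb : 0 < b) :
    pdens G₁ G₂ δ K a b / pbar G₁ G₂ K a b =
      (1 - exp (-(4 * √(a * b) * K))) / (4 * √(a * b) * K) * (√(1 - δ ^ 2))⁻¹ *
        exp ((2 * δ * √(a * b) / √(G₁ * G₂) - δ ^ 2 * (a / G₁ + b / G₂)) / (1 - δ ^ 2)) := by
  have hab : 0 < √(a * b) := sqrt_pos.2 (mul_pos ha hb)
  have hrpow : (a * b) ^ (-(1 : ℝ) / 2) = (√(a * b))⁻¹ := by
    rw [neg_div, rpow_neg (mul_pos ha hb).le, ← sqrt_eq_rpow]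
  have := sqrt_pos.2 (mul_pos hG₁ hG₂)
  have := sqrt_pos.2 (sub_pos.2 hδ)
  rw [pdens, pbar_eq hG₁ hG₂, gdens_sqrt_two_mul hG₁ hG₂ hδ ha.le hb.le, hrpow, exp_add,
    neg_mul, neg_mul]
  field_simp
  ring

lemma abs_correlation_exponent_le {c₀ G₁ G₂ δ a b : ℝ} (hc₀ : 0 < c₀) (hG₁ : c₀ ≤ G₁)
    (hG₂ : c₀ ≤ G₂) (hδ0 : 0 ≤ δ) (hδ : δ ≤ 1 / 2) (ha : 0 ≤ a) (hb : 0 ≤ b) :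
    |(2 * δ * √(a * b) / √(G₁ * G₂) - δ ^ 2 * (a / G₁ + b / G₂)) / (1 - δ ^ 2)| ≤
      4 / 3 * (2 * δ * √(a * b) + δ ^ 2 * (a + b)) / c₀ := by
  have hG₁pos := hc₀.trans_le hG₁
  have hG₂pos := hc₀.trans_le hG₂
  have hG : c₀ ≤ √(G₁ * G₂) := le_sqrt_of_sq_le (by nlinarith)
  have hcross : 2 * δ * √(a * b) / √(G₁ * G₂) ≤ 2 * δ * √(a * b) / c₀ :=
    div_le_div_of_nonneg_left (by positivity) hc₀ hG
  have hdiag : δ ^ 2 * (a / G₁ + b / G₂) ≤ δ ^ 2 * (a + b) / c₀ := by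
    rw [mul_div_assoc, add_div]
    gcongr
  have hnum : |2 * δ * √(a * b) / √(G₁ * G₂) - δ ^ 2 * (a / G₁ + b / G₂)| ≤
      (2 * δ * √(a * b) + δ ^ 2 * (a + b)) / c₀ := by
    have : 0 ≤ 2 * δ * √(a * b) / √(G₁ * G₂) := by positivity
    have : 0 ≤ δ ^ 2 * (a / G₁ + b / G₂) := by positivity
    rw [abs_le, add_div]
    constructor <;> linarith
  have hδ' : 0 < 1 - δ ^ 2 := by nlinarith
  rw [abs_div, abs_of_pos hδ', div_le_iff₀ hδ']
  calc _ ≤ (2 * δ * √(a * b) + δ ^ 2 * (a + b)) / c₀ := hnum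
    _ ≤ 4 / 3 * (2 * δ * √(a * b) + δ ^ 2 * (a + b)) / c₀ * (1 - δ ^ 2) := by
      rw [div_mul_eq_mul_div, mul_right_comm]
      gcongr
      nlinarith [mul_le_mul hδ hδ hδ0 (by norm_num),
        show 0 ≤ 2 * δ * √(a * b) + δ ^ 2 * (a + b) by positivity]

section SmallParameters

variable {C₀ ε t a b : ℝ}

lemma mul_sqrt_mul_le_mul_min (hε : 0 < ε) (ht0 : 0 ≤ t) (ht : t ≤ C₀ * ε) (ha : 0 ≤ a)
    (haε : a * ε ≤ 1) (hb : 0 ≤ b) (hbε : b * ε ≤ 1) :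
    t * √(a * b) ≤ C₀ * min 1 ((a * b + 1) * ε) := by
  have hC₀ : 0 ≤ C₀ := nonneg_of_mul_nonneg_left (ht0.trans ht) hε
  have hsqrt : √(a * b) ≤ a * b + 1 := sqrt_le_left (by positivity) |>.2 (by nlinarith)
  have hεsqrt : ε * √(a * b) ≤ 1 := by
    rw [← sqrt_sq hε.le, ← sqrt_mul (sq_nonneg ε), sqrt_le_one]
    nlinarith [mul_le_mul haε hbε (by positivity) zero_le_one]
  calc t * √(a * b) ≤ C₀ * ε * √(a * b) := by gcongr
    _ = C₀ * (ε * √(a * b)) := mul_assoc _ _ _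
    _ ≤ C₀ * min 1 ((a * b + 1) * ε) := by
      gcongr
      exact le_min hεsqrt (by nlinarith)

lemma sq_le_sq_mul_min (hε : 0 < ε) (hε1 : ε ≤ 1) (ht0 : 0 ≤ t) (ht : t ≤ C₀ * ε) (ha : 0 ≤ a)
    (hb : 0 ≤ b) : t ^ 2 ≤ C₀ ^ 2 * min 1 ((a * b + 1) * ε) :=
  calc t ^ 2 ≤ (C₀ * ε) ^ 2 := by gcongr
    _ = C₀ ^ 2 * (ε * ε) := by ring
    _ ≤ C₀ ^ 2 * min 1 ((a * b + 1) * ε) := by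
      gcongr
      exact le_min (by nlinarith) (by nlinarith [mul_nonneg ha hb])

lemma sq_mul_add_le_mul_min (hε : 0 < ε) (hε1 : ε ≤ 1) (ht0 : 0 ≤ t) (ht : t ≤ C₀ * ε)
    (ha : 0 ≤ a) (haε : a * ε ≤ 1) (hb : 0 ≤ b) (hbε : b * ε ≤ 1) :
    t ^ 2 * (a + b) ≤ 2 * C₀ ^ 2 * min 1 ((a * b + 1) * ε) :=
  calc t ^ 2 * (a + b) ≤ (C₀ * ε) ^ 2 * (a + b) := by gcongr
    _ = C₀ ^ 2 * ε * (a * ε + b * ε) := by ring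
    _ ≤ C₀ ^ 2 * ε * 2 := by gcongr; linarith
    _ ≤ 2 * C₀ ^ 2 * min 1 ((a * b + 1) * ε) := by
      have : ε ≤ min 1 ((a * b + 1) * ε) := le_min hε1 (by nlinarith [mul_nonneg ha hb])
      nlinarith

end SmallParameters

lemma abs_correlation_exponent_le_mul_min {c₀ C₀ ε G₁ G₂ δ a b : ℝ} (hc₀ : 0 < c₀)
    (hG₁ : c₀ ≤ G₁) (hG₂ : c₀ ≤ G₂) (hε : 0 < ε) (hε1 : ε ≤ 1) (hδ0 : 0 ≤ δ) (hδ : δ ≤ 1 / 2)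
    (hδε : δ ≤ C₀ * ε) (ha : 0 ≤ a) (haε : a * ε ≤ 1) (hb : 0 ≤ b) (hbε : b * ε ≤ 1) :
    |(2 * δ * √(a * b) / √(G₁ * G₂) - δ ^ 2 * (a / G₁ + b / G₂)) / (1 - δ ^ 2)| ≤
      8 * (C₀ + C₀ ^ 2) / (3 * c₀) * min 1 ((a * b + 1) * ε) := by
  have hcross := mul_sqrt_mul_le_mul_min hε hδ0 hδε ha haε hb hbε
  have hdiag := sq_mul_add_le_mul_min hε hε1 hδ0 hδε ha haε hb hbε
  calc _ ≤ 4 / 3 * (2 * δ * √(a * b) + δ ^ 2 * (a + b)) / c₀ :=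
        abs_correlation_exponent_le hc₀ hG₁ hG₂ hδ0 hδ ha hb
    _ ≤ 4 / 3 * (2 * (C₀ + C₀ ^ 2) * min 1 ((a * b + 1) * ε)) / c₀ := by gcongr; linarith
    _ = 8 * (C₀ + C₀ ^ 2) / (3 * c₀) * min 1 ((a * b + 1) * ε) := by ring

lemma abs_exp_sub_one_le_of_abs_le_mul_min {x M r : ℝ} (hM : 0 ≤ M) (hx : |x| ≤ M * min 1 r) :
    |exp x - 1| ≤ M * exp M * r :=
  calc |exp x - 1| ≤ |x| * exp |x| := abs_exp_sub_one_le_abs_mul_exp_abs x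
    _ ≤ M * r * exp M := by
      have hxr : |x| ≤ M * r := hx.trans (mul_le_mul_of_nonneg_left (min_le_right 1 r) hM)
      have hxM : |x| ≤ M := hx.trans (mul_le_of_le_one_right hM (min_le_left 1 r))
      exact mul_le_mul hxr (exp_le_exp.2 hxM) (exp_pos _).le ((abs_nonneg x).trans hxr)
    _ = M * exp M * r := by ring

theorem stmt0_general (c₀ C₀ : ℝ) (hc₀pos : 0 < c₀) (hC₀ : 1 ≤ C₀) :
    ∃ C₁ : ℝ, 0 < C₁ ∧
      ∀ ε G₁ G₂ δ K : ℝ,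
        0 < ε → ε ≤ 1 →
        c₀ ≤ G₁ → G₁ ≤ C₀ → c₀ ≤ G₂ → G₂ ≤ C₀ →
        0 ≤ δ → δ ≤ 1 / 2 → δ ≤ C₀ * ε →
        0 < K → K ≤ C₀ * ε →
        ∀ a b : ℝ, 0 < a → a ≤ 1 / ε → 0 < b → b ≤ 1 / ε →
          |pdens G₁ G₂ δ K a b / pbar G₁ G₂ K a b - 1| ≤ C₁ * (a * b + 1) * ε := by
  set M := 8 * (C₀ + C₀ ^ 2) / (3 * c₀)
  have hM : 0 ≤ M := by positivity
  refine ⟨2 * (M * exp M) + C₀ ^ 2 + 4 * C₀, by positivity, ?_⟩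
  intro ε G₁ G₂ δ K hε hε1 hG₁ _ hG₂ _ hδ0 hδ hδε hK hKε a b ha haε hb hbε
  rw [le_div_iff₀ hε] at haε hbε
  have hδsq : δ ^ 2 ≤ 1 / 4 := by nlinarith
  rw [pdens_div_pbar (hc₀pos.trans_le hG₁) (hc₀pos.trans_le hG₂) (by linarith) hK ha hb]
  have hx : 0 < 4 * √(a * b) * K := by positivity
  have hKab := mul_sqrt_mul_le_mul_min hε hK.le hKε ha.le haε hb.le hbε
  have hδr := sq_le_sq_mul_min hε hε1 hδ0 hδε ha.le hb.le
  have hD := abs_inv_sqrt_one_sub_sub_one_le (sq_nonneg δ) (by linarith)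
  have hE :=
    abs_correlation_exponent_le_mul_min hc₀pos hG₁ hG₂ hε hε1 hδ0 hδ hδε ha.le haε hb.le hbε
  set r := (a * b + 1) * ε
  have hmin : min 1 r ≤ r := min_le_right 1 r
  calc _ ≤ _ := abs_mul_mul_sub_one_le _ _ _
    _ ≤ 1 * 2 * (M * exp M * r) + 1 * (C₀ ^ 2 * r) + 4 * C₀ * r := by
      gcongr
      · exact abs_one_sub_exp_neg_div_self_le_one hx
      · linarith [abs_sub_abs_le_abs_sub (√(1 - δ ^ 2))⁻¹ 1, abs_one (α := ℝ)]
      · exact abs_exp_sub_one_le_of_abs_le_mul_min hM hE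
      · exact abs_one_sub_exp_neg_div_self_le_one hx
      · exact hD.trans (hδr.trans (mul_le_mul_of_nonneg_left hmin (sq_nonneg C₀)))
      · nlinarith [abs_one_sub_exp_neg_div_self_sub_one_le hx]
    _ = (2 * (M * exp M) + C₀ ^ 2 + 4 * C₀) * (a * b + 1) * ε := by ring

theorem stmt0 (c₀ C₀ : ℝ) (hc₀pos : 0 < c₀) (hc₀le : c₀ ≤ 1) (hC₀ : 1 ≤ C₀) :
    ∃ C₁ : ℝ, 0 < C₁ ∧
      ∀ ε G₁ G₂ δ K : ℝ,
        0 < ε → ε ≤ 1 →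
        c₀ ≤ G₁ → G₁ ≤ C₀ → c₀ ≤ G₂ → G₂ ≤ C₀ →
        0 ≤ δ → δ ≤ 1 / 2 → δ ≤ C₀ * ε →
        0 < K → K ≤ C₀ * ε →
        ∀ a b : ℝ, 0 < a → a ≤ 1 / ε → 0 < b → b ≤ 1 / ε →
          |pdens G₁ G₂ δ K a b / pbar G₁ G₂ K a b - 1| ≤ C₁ * (a * b + 1) * ε :=
  stmt0_general c₀ C₀ hc₀pos hC₀
end

section
/- For all real λ ∈ (0, 1] and q ∈ [0, 1]: q / cosh 1 ≤ ( sinh λ − sinh(λ·(1−q)) ) / sinh λ ≤ q · cosh 1. Equivalently, 1 − sinh(λ·(1−q))/sinh λ is bounded above and below by constant multiples of q, uniformly for λ ∈ (0,1]. -/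
/-!
Since `1 ≤ cosh ≤ cosh 1` on `[-1, 1]`, the mean value theorem squeezes every difference quotient
of `sinh` on `[-1, 1]` between `1` and `cosh 1`. Applied to the numerator `sinh λ - sinh (λ(1-q))`
(an increment of length `λq`) and to the denominator `sinh λ - sinh 0`, this makes the numerator
comparable to `λq` and the denominator comparable to `λ`, and `λ` cancels in the ratio.
-/

open Set

namespace Real

theorem sub_le_sinh_sub_sinh {x y : ℝ} (hxy : x ≤ y) : y - x ≤ sinh y - sinh x := by
  simpa using mul_sub_le_image_sub_of_le_deriv differentiable_sinh
    (fun z => (deriv_sinh ▸ one_le_cosh z : 1 ≤ deriv sinh z)) hxy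

theorem sinh_sub_sinh_le_cosh_mul_sub {c x y : ℝ} (hx : x ∈ Icc (-c) c) (hy : y ∈ Icc (-c) c)
    (hxy : x ≤ y) : sinh y - sinh x ≤ cosh c * (y - x) := by
  refine (convex_Icc (-c) c).image_sub_le_mul_sub_of_deriv_le continuous_sinh.continuousOn
    differentiable_sinh.differentiableOn (fun z hz => ?_) x hx y hy hxy
  rw [interior_Icc] at hz
  rw [deriv_sinh, cosh_le_cosh]
  exact (abs_le.mpr ⟨hz.1.le, hz.2.le⟩).trans (le_abs_self c)

end Real

open Real

theorem stmt3 (lam q : ℝ) (hlam0 : 0 < lam) (hlam1 : lam ≤ 1) (hq0 : 0 ≤ q) (hq1 : q ≤ 1) :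
    q / Real.cosh 1 ≤ (Real.sinh lam - Real.sinh (lam * (1 - q))) / Real.sinh lam ∧
      (Real.sinh lam - Real.sinh (lam * (1 - q))) / Real.sinh lam ≤ q * Real.cosh 1 := by
  have hlam : lam ∈ Icc (-1 : ℝ) 1 := ⟨by linarith, hlam1⟩
  have hzero : (0 : ℝ) ∈ Icc (-1 : ℝ) 1 := ⟨by norm_num, zero_le_one⟩
  have hx0 : 0 ≤ lam * (1 - q) := mul_nonneg hlam0.le (by linarith)
  have hxlam : lam * (1 - q) ≤ lam := by nlinarith
  have hx : lam * (1 - q) ∈ Icc (-1 : ℝ) 1 := ⟨by linarith, hxlam.trans hlam1⟩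
  have hnum_lo := sub_le_sinh_sub_sinh hxlam
  have hnum_hi := sinh_sub_sinh_le_cosh_mul_sub hx hlam hxlam
  have hden_lo := sub_le_sinh_sub_sinh hlam0.le
  have hden_hi := sinh_sub_sinh_le_cosh_mul_sub hzero hlam hlam0.le
  rw [sinh_zero, sub_zero, sub_zero] at hden_lo hden_hi
  have hsinh : 0 < sinh lam := sinh_pos_iff.mpr hlam0
  have hcosh : 1 ≤ cosh 1 := one_le_cosh 1
  constructor
  · rw [div_le_div_iff₀ (by linarith) hsinh]
    nlinarith
  · rw [div_le_iff₀ hsinh]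
    nlinarith
end

section
/- Let A ≥ 1 be a real number and let h : ℝ → ℝ be a measurable function such that 0 ≤ h(χ) ≤ A·√χ for all χ ∈ (0, 1], and such that h(χ) ≤ A·χ^(3/2)·( 1 + ∫_{t ∈ [1, 3/χ]} h(1/t) dt ) for all χ ∈ (0, 1]. Then there exists C > 0, depending only on A, such that h(χ) ≤ C·χ^(3/2) for all χ ∈ (0, 1]. -/
/-!
Substituting the a priori bound `h χ ≤ B χ^α` into the integral inequality and integrating
`t^(-α)` over `[1, 3/χ]` improves it: for `α < 1` the integral is `O(χ^(α-1))`, which yields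
`h χ = O(χ^(α + 1/2))`, while for `α > 1` it is bounded uniformly in `χ`, which yields
`h χ = O(χ^(3/2))`. Starting from `h χ ≤ A √χ ≤ A χ^(1/4)`, two steps of the first kind reach
the exponent `5/4 > 1` (the exponent `1`, where a logarithm appears, is skipped), and one step of
the second kind finishes.
-/

open MeasureTheory Set Real

lemma integral_Icc_one_rpow_neg {α b : ℝ} (hα : α ≠ 1) (hb : 1 ≤ b) :
    ∫ t in Icc 1 b, t ^ (-α) = (b ^ (1 - α) - 1) / (1 - α) := by
  have hα' : -α ≠ -1 := fun h ↦ hα (neg_inj.mp h)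
  rw [integral_Icc_eq_integral_Ioc, ← intervalIntegral.integral_of_le hb,
    integral_rpow (Or.inr ⟨hα', notMem_uIcc_of_lt one_pos (one_pos.trans_le hb)⟩),
    one_rpow, neg_add_eq_sub]

lemma integral_Icc_one_rpow_neg_le_of_lt_one {α b : ℝ} (hα : α < 1) (hb : 1 ≤ b) :
    ∫ t in Icc 1 b, t ^ (-α) ≤ b ^ (1 - α) / (1 - α) := by
  rw [integral_Icc_one_rpow_neg hα.ne hb]
  gcongr
  linarith

lemma integral_Icc_one_rpow_neg_le_of_one_lt {α b : ℝ} (hα : 1 < α) (hb : 1 ≤ b) :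
    ∫ t in Icc 1 b, t ^ (-α) ≤ 1 / (α - 1) := by
  have hb' : b ^ (1 - α) ≤ 1 := rpow_le_one_of_one_le_of_nonpos hb (by linarith)
  rw [integral_Icc_one_rpow_neg hα.ne' hb, ← neg_div_neg_eq, neg_sub, neg_sub]
  gcongr
  linarith [rpow_nonneg (zero_le_one.trans hb) (1 - α)]

lemma setIntegral_Icc_comp_inv_le {h : ℝ → ℝ} {B α b : ℝ}
    (hnonneg : ∀ χ ∈ Ioc (0 : ℝ) 1, 0 ≤ h χ) (hbound : ∀ χ ∈ Ioc (0 : ℝ) 1, h χ ≤ B * χ ^ α) :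
    ∫ t in Icc 1 b, h (1 / t) ≤ B * ∫ t in Icc 1 b, t ^ (-α) := by
  have hinv : ∀ t ∈ Icc (1 : ℝ) b, 1 / t ∈ Ioc (0 : ℝ) 1 := fun t ht ↦
    ⟨one_div_pos.mpr (one_pos.trans_le ht.1), (div_le_one (one_pos.trans_le ht.1)).mpr ht.1⟩
  have hint : IntegrableOn (fun t ↦ B * t ^ (-α)) (Icc 1 b) :=
    (continuousOn_const.mul (continuousOn_id.rpow_const fun t ht ↦
      Or.inl (one_pos.trans_le ht.1).ne')).integrableOn_Icc
  rw [← integral_const_mul]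
  refine integral_mono_of_nonneg ?_ hint ?_
  · filter_upwards [ae_restrict_mem measurableSet_Icc] with t ht using hnonneg _ (hinv t ht)
  · filter_upwards [ae_restrict_mem measurableSet_Icc] with t ht
    have ht₀ : 0 ≤ t := zero_le_one.trans ht.1
    simpa only [one_div, inv_rpow ht₀, ← rpow_neg ht₀] using hbound _ (hinv t ht)

lemma le_mul_rpow_add_half_of_le_mul_rpow {h : ℝ → ℝ} {A B α : ℝ} (hA : 0 ≤ A) (hB : 0 ≤ B)
    (hα₀ : 0 ≤ α) (hα₁ : α < 1) (hnonneg : ∀ χ ∈ Ioc (0 : ℝ) 1, 0 ≤ h χ)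
    (hrec : ∀ χ ∈ Ioc (0 : ℝ) 1,
      h χ ≤ A * χ ^ ((3 : ℝ) / 2) * (1 + ∫ t in Icc (1 : ℝ) (3 / χ), h (1 / t)))
    (hbound : ∀ χ ∈ Ioc (0 : ℝ) 1, h χ ≤ B * χ ^ α) :
    ∀ χ ∈ Ioc (0 : ℝ) 1, h χ ≤ (A + 3 * A * B / (1 - α)) * χ ^ (α + 1 / 2) := by
  intro χ ⟨hχ₀, hχ₁⟩
  have hb : 1 ≤ 3 / χ := by rw [le_div_iff₀ hχ₀]; linarith
  have hpow : (3 / χ) ^ (1 - α) ≤ 3 * χ ^ (α - 1) := by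
    rw [div_rpow zero_le_three hχ₀.le, div_eq_mul_inv, ← rpow_neg hχ₀.le, neg_sub]
    gcongr
    exact rpow_le_self_of_one_le (by norm_num) (by linarith)
  have hint : ∫ t in Icc (1 : ℝ) (3 / χ), h (1 / t) ≤ 3 * B / (1 - α) * χ ^ (α - 1) :=
    calc ∫ t in Icc (1 : ℝ) (3 / χ), h (1 / t)
        ≤ B * ((3 / χ) ^ (1 - α) / (1 - α)) :=
          (setIntegral_Icc_comp_inv_le hnonneg hbound).trans
            (by gcongr; exact integral_Icc_one_rpow_neg_le_of_lt_one hα₁ hb)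
      _ ≤ B * (3 * χ ^ (α - 1) / (1 - α)) := by gcongr
      _ = 3 * B / (1 - α) * χ ^ (α - 1) := by ring
  have hexp : χ ^ ((3 : ℝ) / 2) ≤ χ ^ (α + 1 / 2) :=
    rpow_le_rpow_of_exponent_ge hχ₀ hχ₁ (by linarith)
  have hmul : χ ^ ((3 : ℝ) / 2) * χ ^ (α - 1) = χ ^ (α + 1 / 2) := by
    rw [← rpow_add hχ₀]; ring_nf
  calc h χ ≤ A * χ ^ ((3 : ℝ) / 2) * (1 + 3 * B / (1 - α) * χ ^ (α - 1)) :=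
        (hrec χ ⟨hχ₀, hχ₁⟩).trans (by gcongr)
    _ = A * χ ^ ((3 : ℝ) / 2) + 3 * A * B / (1 - α) * χ ^ (α + 1 / 2) := by
        rw [← hmul]; ring
    _ ≤ (A + 3 * A * B / (1 - α)) * χ ^ (α + 1 / 2) := by
        rw [add_mul]; gcongr

lemma le_mul_rpow_three_halves_of_le_mul_rpow {h : ℝ → ℝ} {A B α : ℝ} (hA : 0 ≤ A)
    (hB : 0 ≤ B) (hα : 1 < α) (hnonneg : ∀ χ ∈ Ioc (0 : ℝ) 1, 0 ≤ h χ)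
    (hrec : ∀ χ ∈ Ioc (0 : ℝ) 1,
      h χ ≤ A * χ ^ ((3 : ℝ) / 2) * (1 + ∫ t in Icc (1 : ℝ) (3 / χ), h (1 / t)))
    (hbound : ∀ χ ∈ Ioc (0 : ℝ) 1, h χ ≤ B * χ ^ α) :
    ∀ χ ∈ Ioc (0 : ℝ) 1, h χ ≤ A * (1 + B / (α - 1)) * χ ^ ((3 : ℝ) / 2) := by
  intro χ ⟨hχ₀, hχ₁⟩
  have hb : 1 ≤ 3 / χ := by rw [le_div_iff₀ hχ₀]; linarith
  have hint : ∫ t in Icc (1 : ℝ) (3 / χ), h (1 / t) ≤ B / (α - 1) :=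
    calc ∫ t in Icc (1 : ℝ) (3 / χ), h (1 / t)
        ≤ B * (1 / (α - 1)) :=
          (setIntegral_Icc_comp_inv_le hnonneg hbound).trans
            (by gcongr; exact integral_Icc_one_rpow_neg_le_of_one_lt hα hb)
      _ = B / (α - 1) := mul_one_div B _
  calc h χ ≤ A * χ ^ ((3 : ℝ) / 2) * (1 + B / (α - 1)) := (hrec χ ⟨hχ₀, hχ₁⟩).trans (by gcongr)
    _ = A * (1 + B / (α - 1)) * χ ^ ((3 : ℝ) / 2) := by ring

theorem stmt5 (A : ℝ) (hA : 1 ≤ A) :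
    ∃ C : ℝ, 0 < C ∧
      ∀ h : ℝ → ℝ, Measurable h →
        (∀ χ ∈ Set.Ioc (0 : ℝ) 1, 0 ≤ h χ ∧ h χ ≤ A * Real.sqrt χ) →
        (∀ χ ∈ Set.Ioc (0 : ℝ) 1,
          h χ ≤ A * χ ^ ((3 : ℝ) / 2) * (1 + ∫ t in Set.Icc (1 : ℝ) (3 / χ), h (1 / t))) →
        ∀ χ ∈ Set.Ioc (0 : ℝ) 1, h χ ≤ C * χ ^ ((3 : ℝ) / 2) := by
  have hA₀ : 0 ≤ A := zero_le_one.trans hA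
  set B₁ := A + 3 * A * A / (1 - 1 / 4)
  set B₂ := A + 3 * A * B₁ / (1 - (1 / 4 + 1 / 2))
  have hB₁ : 0 ≤ B₁ := by positivity
  have hB₂ : 0 ≤ B₂ := by positivity
  refine ⟨A * (1 + B₂ / (1 / 4 + 1 / 2 + 1 / 2 - 1)), by positivity, ?_⟩
  intro h _ hsqrt hrec
  have hnonneg : ∀ χ ∈ Ioc (0 : ℝ) 1, 0 ≤ h χ := fun χ hχ ↦ (hsqrt χ hχ).1
  have h₀ : ∀ χ ∈ Ioc (0 : ℝ) 1, h χ ≤ A * χ ^ ((1 : ℝ) / 4) := fun χ hχ ↦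
    (hsqrt χ hχ).2.trans <| by
      rw [sqrt_eq_rpow]
      exact mul_le_mul_of_nonneg_left (rpow_le_rpow_of_exponent_ge hχ.1 hχ.2 (by norm_num)) hA₀
  have h₁ := le_mul_rpow_add_half_of_le_mul_rpow hA₀ hA₀ (by norm_num) (by norm_num)
    hnonneg hrec h₀
  have h₂ := le_mul_rpow_add_half_of_le_mul_rpow hA₀ hB₁ (by norm_num) (by norm_num)
    hnonneg hrec h₁
  exact le_mul_rpow_three_halves_of_le_mul_rpow hA₀ hB₂ (by norm_num) hnonneg hrec h₂
end

section
/- Let d ≥ 7 be an integer. There exists a constant C = C(d) > 0 such that for every real N ≥ 1 and all v₁, v₂, w ∈ ℤ^d with ‖v₂ − w‖ ≥ N: the function z ↦ ⟨z−v₁⟩^(2−d) · ⟨z−v₂⟩^(2−d) · ⟨z−w⟩^(2−d) is summable over ℤ^d and ∑'_{z ∈ ℤ^d} ⟨z−v₁⟩^(2−d) · ⟨z−v₂⟩^(2−d) · ⟨z−w⟩^(2−d) ≤ C · N^(2−d) · ( ⟨v₁−w⟩^(4−d) + ⟨v₁−v₂⟩^(4−d) ). -/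
/-- Euclidean norm of a lattice point of `ℤ^d`. -/
noncomputable def euclNorm {d : ℕ} (x : Fin d → ℤ) : ℝ :=
  Real.sqrt (∑ i, ((x i : ℝ)) ^ 2)

/-- The "Japanese bracket" `⟨x⟩ = ‖x‖ + 1`. -/
noncomputable def jap {d : ℕ} (x : Fin d → ℤ) : ℝ := euclNorm x + 1

/-- Sup norm of a lattice point of `ℤ^d`. -/
noncomputable def supNorm {d : ℕ} (x : Fin d → ℤ) : ℝ :=
  ((Finset.univ.sup (fun i => (x i).natAbs) : ℕ) : ℝ)

/-- The sup-norm box `B_y(M)` of radius `M` centred at `y`. -/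
def latBox {d : ℕ} (y : Fin d → ℤ) (M : ℝ) : Set (Fin d → ℤ) :=
  {x | supNorm (x - y) ≤ M}

/-- The inner vertex boundary `∂B_y(M)` of the box `B_y(M)`. -/
def latBdry {d : ℕ} (y : Fin d → ℤ) (M : ℝ) : Set (Fin d → ℤ) :=
  {x | x ∈ latBox y M ∧ ∃ x', x' ∉ latBox y M ∧ (∑ i, |x i - x' i|) = 1}

/-!
Since `⟨z - v₂⟩ + ⟨z - w⟩ ≥ ⟨v₂ - w⟩ > N`, one of these two factors is at most
`(N / 2) ^ (2 - d)`, which reduces the claim to the two-kernel bound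
`∑ z, ⟨z - a⟩ ^ r * ⟨z - b⟩ ^ r ≲ ⟨a - b⟩ ^ (d + 2 r)` with `r = 2 - d`. For that bound put
`ρ = ⟨a - b⟩ / 2`: if one of `⟨z - a⟩, ⟨z - b⟩` is at most `ρ`, the other is at least `ρ`, and if
both exceed `ρ` the product is at most the sum of the squares. What remains are the sum of `⟨x⟩ ^ r`
over `⟨x⟩ ≤ ρ`, of order `ρ ^ (d + r)`, and the sum of `⟨x⟩ ^ (2 r)` over `⟨x⟩ > ρ`, of order
`ρ ^ (d + 2 r)` because `2 r < -d`. Both are estimated by grouping `ℤ^d` into sup-norm shells, of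
size `O(k ^ (d - 1))`, and comparing with one-dimensional sums, the tail by the integral test.
-/

open Finset

section

variable {d : ℕ}

def toEuclideanSpace (x : Fin d → ℤ) : EuclideanSpace ℝ (Fin d) :=
  WithLp.toLp 2 fun i => (x i : ℝ)

lemma euclNorm_eq_norm (x : Fin d → ℤ) : euclNorm x = ‖toEuclideanSpace x‖ := by
  simp [EuclideanSpace.norm_eq, euclNorm, toEuclideanSpace]

lemma toEuclideanSpace_sub (x y : Fin d → ℤ) :
    toEuclideanSpace (x - y) = toEuclideanSpace x - toEuclideanSpace y := by
  ext i; simp [toEuclideanSpace]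

lemma euclNorm_sub_le_add (a b z : Fin d → ℤ) :
    euclNorm (a - b) ≤ euclNorm (z - a) + euclNorm (z - b) := by
  simp only [euclNorm_eq_norm, toEuclideanSpace_sub, ← dist_eq_norm]
  exact dist_triangle_left _ _ _

lemma jap_pos (x : Fin d → ℤ) : 0 < jap x := by
  unfold jap euclNorm; positivity

lemma jap_rpow_pos (x : Fin d → ℤ) (r : ℝ) : 0 < jap x ^ r :=
  Real.rpow_pos_of_pos (jap_pos x) r

def supNormNat (x : Fin d → ℤ) : ℕ := univ.sup fun i => (x i).natAbs

lemma abs_le_supNormNat (x : Fin d → ℤ) (i : Fin d) : |(x i : ℝ)| ≤ supNormNat x := by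
  rw [← Int.cast_abs, Int.abs_eq_natAbs]
  exact_mod_cast le_sup (f := fun i => (x i).natAbs) (mem_univ i)

lemma supNormNat_add_one_le_jap (x : Fin d → ℤ) : (supNormNat x : ℝ) + 1 ≤ jap x := by
  have hnorm : supNormNat x ≤ ⌊euclNorm x⌋₊ := by
    refine Finset.sup_le fun i _ => Nat.le_floor ?_
    rw [euclNorm_eq_norm, Nat.cast_natAbs, Int.cast_abs]
    exact PiLp.norm_apply_le (toEuclideanSpace x) i
  have := (Nat.cast_le (α := ℝ)).2 hnorm
  have := Nat.floor_le (euclNorm_eq_norm x ▸ norm_nonneg (toEuclideanSpace x))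
  unfold jap; linarith

lemma jap_le_mul_supNormNat_add_one (hd : d ≠ 0) (x : Fin d → ℤ) :
    jap x ≤ d * ((supNormNat x : ℝ) + 1) := by
  have hd1 : (1 : ℝ) ≤ d := by exact_mod_cast Nat.one_le_iff_ne_zero.2 hd
  have hsq : ∑ i, ((x i : ℝ)) ^ 2 ≤ ((d : ℝ) * supNormNat x) ^ 2 := by
    calc ∑ i, ((x i : ℝ)) ^ 2 ≤ ∑ _i : Fin d, ((supNormNat x : ℝ)) ^ 2 :=
          sum_le_sum fun i _ => sq_le_sq' (abs_le.1 (abs_le_supNormNat x i)).1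
            (abs_le.1 (abs_le_supNormNat x i)).2
      _ = d * (supNormNat x : ℝ) ^ 2 := by simp
      _ ≤ ((d : ℝ) * supNormNat x) ^ 2 := by rw [mul_pow]; gcongr; nlinarith
  have := Real.sqrt_le_sqrt hsq
  rw [Real.sqrt_sq (by positivity)] at this
  unfold jap euclNorm
  nlinarith

noncomputable def latticeCube (d n : ℕ) : Finset (Fin d → ℤ) :=
  Fintype.piFinset fun _ => Icc (-(n : ℤ)) n

lemma mem_latticeCube {n : ℕ} {x : Fin d → ℤ} : x ∈ latticeCube d n ↔ supNormNat x ≤ n := by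
  simp only [latticeCube, Fintype.mem_piFinset, mem_Icc, supNormNat, Finset.sup_le_iff, mem_univ,
    true_implies]
  exact forall_congr' fun i => by omega

lemma card_latticeCube (d n : ℕ) : #(latticeCube d n) = (2 * n + 1) ^ d := by
  simp only [latticeCube, Fintype.card_piFinset, Int.card_Icc, prod_const, card_univ,
    Fintype.card_fin]
  congr 1
  omega

noncomputable def latticeShell (d n : ℕ) : Finset (Fin d → ℤ) :=
  {x ∈ latticeCube d n | supNormNat x = n}

lemma card_latticeShell_le (hd : d ≠ 0) (n : ℕ) :
    #(latticeShell d n) ≤ 2 * d * (2 * n + 1) ^ (d - 1) := by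
  cases n with
  | zero =>
    have := card_le_card (filter_subset (supNormNat · = 0) (latticeCube d 0))
    rw [card_latticeCube] at this
    simp only [latticeShell, mul_zero, zero_add, one_pow] at this ⊢
    omega
  | succ k =>
    have hsub : latticeShell d (k + 1) ⊆ latticeCube d (k + 1) \ latticeCube d k := fun x hx => by
      simp only [latticeShell, mem_filter, mem_latticeCube] at hx
      simp only [mem_sdiff, mem_latticeCube]
      omega
    have hcube : latticeCube d k ⊆ latticeCube d (k + 1) := fun x hx => by
      rw [mem_latticeCube] at hx ⊢; omega
    have hle : (2 * k + 1) ^ d ≤ (2 * (k + 1) + 1) ^ d := Nat.pow_le_pow_left (by omega) d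
    have hpow : ((2 * (k + 1) + 1 : ℕ) : ℤ) ^ d - ((2 * k + 1 : ℕ) : ℤ) ^ d ≤
        2 * d * ((2 * (k + 1) + 1 : ℕ) : ℤ) ^ (d - 1) := by
      refine (le_abs_self _).trans ((abs_pow_sub_pow_le _ _ d).trans_eq ?_)
      rw [max_eq_left (by simp only [Nat.abs_cast]; omega), Nat.abs_cast,
        show ((2 * (k + 1) + 1 : ℕ) : ℤ) - (2 * k + 1 : ℕ) = 2 by push_cast; ring, abs_two]
    calc #(latticeShell d (k + 1)) ≤ #(latticeCube d (k + 1) \ latticeCube d k) :=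
          card_le_card hsub
      _ = (2 * (k + 1) + 1) ^ d - (2 * k + 1) ^ d := by
        rw [card_sdiff_of_subset hcube, card_latticeCube, card_latticeCube]
      _ ≤ 2 * d * (2 * (k + 1) + 1) ^ (d - 1) := by
        zify [hle]; exact_mod_cast hpow

lemma card_latticeShell_le_rpow (hd : d ≠ 0) (k : ℕ) :
    (#(latticeShell d k) : ℝ) ≤ d * 2 ^ d * ((k : ℝ) + 1) ^ ((d : ℝ) - 1) := by
  obtain ⟨e, rfl⟩ := Nat.exists_eq_add_one_of_ne_zero hd
  have hcast : ((e + 1 : ℕ) : ℝ) - 1 = (e : ℕ) := by push_cast; ring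
  rw [hcast, Real.rpow_natCast]
  calc (#(latticeShell (e + 1) k) : ℝ) ≤ ((2 * (e + 1) * (2 * k + 1) ^ e : ℕ) : ℝ) := by
        exact_mod_cast card_latticeShell_le hd k
    _ ≤ 2 * (e + 1) * (2 * ((k : ℝ) + 1)) ^ e := by push_cast; gcongr; linarith
    _ = ((e + 1 : ℕ) : ℝ) * 2 ^ (e + 1) * ((k : ℝ) + 1) ^ e := by rw [mul_pow]; push_cast; ring

theorem summable_and_tsum_le_of_le_supNormNat (hd : d ≠ 0) {G : (Fin d → ℤ) → ℝ} {g : ℕ → ℝ}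
    (hG : ∀ x, 0 ≤ G x) (hg : ∀ k, 0 ≤ g k) (hGg : ∀ x, G x ≤ g (supNormNat x))
    (hsum : Summable fun k : ℕ => ((k : ℝ) + 1) ^ ((d : ℝ) - 1) * g k) :
    Summable G ∧ ∑' x, G x ≤ d * 2 ^ d * ∑' k : ℕ, ((k : ℝ) + 1) ^ ((d : ℝ) - 1) * g k := by
  set A := d * 2 ^ d * ∑' k : ℕ, ((k : ℝ) + 1) ^ ((d : ℝ) - 1) * g k
  have hshell (k : ℕ) :
      ∑ x ∈ latticeShell d k, G x ≤ d * 2 ^ d * (((k : ℝ) + 1) ^ ((d : ℝ) - 1) * g k) := by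
    calc ∑ x ∈ latticeShell d k, G x ≤ #(latticeShell d k) • g k := by
          refine sum_le_card_nsmul _ _ _ fun x hx => ?_
          rw [latticeShell, mem_filter] at hx
          exact hx.2 ▸ hGg x
      _ ≤ _ := by
          rw [nsmul_eq_mul, ← mul_assoc]
          exact mul_le_mul_of_nonneg_right (card_latticeShell_le_rpow hd k) (hg k)
  have hpartial (s : Finset (Fin d → ℤ)) : ∑ x ∈ s, G x ≤ A := by
    set K := s.sup supNormNat
    have hmaps : ∀ x ∈ latticeCube d K, supNormNat x ∈ range (K + 1) := fun x hx => by
      rw [mem_latticeCube] at hx; rw [mem_range]; omega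
    calc ∑ x ∈ s, G x ≤ ∑ x ∈ latticeCube d K, G x :=
          sum_le_sum_of_subset_of_nonneg (fun x hx => mem_latticeCube.2 (le_sup hx))
            fun x _ _ => hG x
      _ = ∑ k ∈ range (K + 1), ∑ x ∈ latticeCube d K with supNormNat x = k, G x :=
          (sum_fiberwise_of_maps_to hmaps G).symm
      _ ≤ ∑ k ∈ range (K + 1), ∑ x ∈ latticeShell d k, G x := by
          refine sum_le_sum fun k _ => sum_le_sum_of_subset_of_nonneg (fun x hx => ?_)
            fun x _ _ => hG x
          rw [mem_filter, mem_latticeCube] at hx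
          rw [latticeShell, mem_filter, mem_latticeCube]
          omega
      _ ≤ ∑ k ∈ range (K + 1), d * 2 ^ d * (((k : ℝ) + 1) ^ ((d : ℝ) - 1) * g k) :=
          sum_le_sum fun k _ => hshell k
      _ ≤ A := by
          rw [← mul_sum]
          exact mul_le_mul_of_nonneg_left
            (hsum.sum_le_tsum _ fun k _ => mul_nonneg (by positivity) (hg k)) (by positivity)
  have hGsum : Summable G := summable_of_sum_le hG hpartial
  exact ⟨hGsum, hGsum.tsum_le_of_sum_le hpartial⟩

lemma summable_and_tsum_ite_le_rpow_le {t M : ℝ} (ht : 0 ≤ t) (hM : 0 < M) :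
    Summable (fun k : ℕ => if (k : ℝ) + 1 ≤ M then ((k : ℝ) + 1) ^ t else 0) ∧
      ∑' k : ℕ, (if (k : ℝ) + 1 ≤ M then ((k : ℝ) + 1) ^ t else 0) ≤ M ^ (t + 1) := by
  have hzero : ∀ k ∉ range ⌊M⌋₊, (if (k : ℝ) + 1 ≤ M then ((k : ℝ) + 1) ^ t else 0) = 0 :=
    fun k hk => if_neg fun h => hk (mem_range.2 (Nat.lt_of_lt_of_le (Nat.lt_succ_self k)
      (Nat.le_floor (by push_cast; exact h))))
  refine ⟨summable_of_ne_finset_zero hzero, ?_⟩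
  calc _ = ∑ k ∈ range ⌊M⌋₊, (if (k : ℝ) + 1 ≤ M then ((k : ℝ) + 1) ^ t else 0) :=
        tsum_eq_sum hzero
    _ ≤ #(range ⌊M⌋₊) • M ^ t := by
        refine sum_le_card_nsmul _ _ _ fun k _ => ?_
        split_ifs with h
        · exact Real.rpow_le_rpow (by positivity) h ht
        · positivity
    _ ≤ M * M ^ t := by
        rw [card_range, nsmul_eq_mul]
        exact mul_le_mul_of_nonneg_right (Nat.floor_le hM.le) (by positivity)
    _ = M ^ (t + 1) := by rw [Real.rpow_add_one hM.ne', mul_comm]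

lemma tsum_rpow_nat_add_le {s : ℝ} (hs : 1 < s) (n : ℕ) :
    ∑' k : ℕ, ((k : ℝ) + n + 1) ^ (-s) ≤ s / (s - 1) * ((n : ℝ) + 1) ^ (1 - s) := by
  set y : ℝ := (n : ℝ) + 1
  have hy : 1 ≤ y := by simp [y]
  have hintegral : ∑' k : ℕ, ((k : ℝ) + 1 + n + 1) ^ (-s) ≤ y ^ (1 - s) / (s - 1) := by
    have h := AntitoneOn.tsum_comp_add_le_integral (f := fun t : ℝ => t ^ (-s)) (n + 1)
      (fun a ha b _ hab => Real.rpow_le_rpow_of_nonpos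
        ((Nat.cast_pos.2 n.succ_pos).trans_le ha) hab (by linarith))
      (integrableOn_Ioi_rpow_of_lt (by linarith) (by positivity))
      fun t ht => Real.rpow_nonneg ((Nat.cast_nonneg _).trans (le_of_lt ht)) _
    rw [integral_Ioi_rpow_of_lt (by linarith) (by positivity)] at h
    convert h using 1
    · congr 1; ext k; push_cast; ring_nf
    · rw [show -s + 1 = 1 - s by ring, ← neg_div_neg_eq, neg_sub]; push_cast; rfl
  have hsummable : Summable fun k : ℕ => ((k : ℝ) + n + 1) ^ (-s) := by
    have := (summable_nat_add_iff (n + 1)).2 (Real.summable_nat_rpow.2 (by linarith : -s < -1))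
    simpa [add_assoc] using this
  rw [hsummable.tsum_eq_zero_add]
  calc _ = y ^ (-s) + ∑' k : ℕ, ((k : ℝ) + 1 + n + 1) ^ (-s) := by
        simp only [y]; push_cast; ring_nf
    _ ≤ y ^ (1 - s) + y ^ (1 - s) / (s - 1) :=
        add_le_add (Real.rpow_le_rpow_of_exponent_le hy (by linarith)) hintegral
    _ = s / (s - 1) * y ^ (1 - s) := by
        field_simp [show s - 1 ≠ 0 by linarith]
        ring

lemma summable_and_tsum_ite_lt_rpow_le {s x : ℝ} (hs : 1 < s) (hx : 0 < x) :
    Summable (fun k : ℕ => if x < (k : ℝ) + 1 then ((k : ℝ) + 1) ^ (-s) else 0) ∧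
      ∑' k : ℕ, (if x < (k : ℝ) + 1 then ((k : ℝ) + 1) ^ (-s) else 0) ≤
        s / (s - 1) * x ^ (1 - s) := by
  set N := ⌊x⌋₊
  have hlt (k : ℕ) : x < (k : ℝ) + 1 ↔ N ≤ k := by
    rw [← Nat.lt_succ_iff, Nat.floor_lt hx.le]; push_cast; rfl
  have hsummable : Summable fun k : ℕ => if x < (k : ℝ) + 1 then ((k : ℝ) + 1) ^ (-s) else 0 := by
    refine .of_nonneg_of_le (fun k => ?_) (fun k => ?_)
      ((summable_nat_add_iff 1).2 (Real.summable_nat_rpow.2 (by linarith : -s < -1)))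
    · split_ifs <;> positivity
    · split_ifs
      · push_cast; rfl
      · positivity
  refine ⟨hsummable, ?_⟩
  rw [← hsummable.sum_add_tsum_nat_add N, sum_eq_zero fun k hk => if_neg ((hlt k).not.2
    (not_le.2 (mem_range.1 hk))), zero_add]
  calc _ = ∑' k : ℕ, ((k : ℝ) + N + 1) ^ (-s) := by
        congr 1; ext k
        rw [if_pos ((hlt _).2 (Nat.le_add_left N k))]; push_cast; ring_nf
    _ ≤ s / (s - 1) * ((N : ℝ) + 1) ^ (1 - s) := tsum_rpow_nat_add_le hs N
    _ ≤ s / (s - 1) * x ^ (1 - s) := by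
        gcongr ?_ * ?_
        exact Real.rpow_le_rpow_of_nonpos hx (Nat.lt_floor_add_one x).le (by linarith)

theorem summable_and_tsum_jap_rpow_near_le {r M : ℝ} (hr : r ≤ 0) (hdr : 0 ≤ (d : ℝ) - 1 + r)
    (hM : 0 < M) :
    Summable (fun x : Fin d → ℤ => if jap x ≤ M then jap x ^ r else 0) ∧
      ∑' x : Fin d → ℤ, (if jap x ≤ M then jap x ^ r else 0) ≤ d * 2 ^ d * M ^ (d + r) := by
  have hd : d ≠ 0 := by rintro rfl; norm_num at hdr; linarith
  have hweight : (fun k : ℕ => ((k : ℝ) + 1) ^ ((d : ℝ) - 1) *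
      if (k : ℝ) + 1 ≤ M then ((k : ℝ) + 1) ^ r else 0) =
      fun k : ℕ => if (k : ℝ) + 1 ≤ M then ((k : ℝ) + 1) ^ ((d : ℝ) - 1 + r) else 0 := by
    ext k; split_ifs <;> simp [Real.rpow_add (by positivity : (0 : ℝ) < k + 1)]
  obtain ⟨hsum, hle⟩ := summable_and_tsum_ite_le_rpow_le hdr hM
  obtain ⟨hGsum, hGle⟩ := summable_and_tsum_le_of_le_supNormNat hd
    (g := fun k : ℕ => if (k : ℝ) + 1 ≤ M then ((k : ℝ) + 1) ^ r else 0)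
    (G := fun x => if jap x ≤ M then jap x ^ r else 0)
    (fun x => by split_ifs; exacts [(jap_rpow_pos x r).le, le_rfl])
    (fun k => by split_ifs <;> positivity)
    (fun x => by
      split_ifs with hx hk hk
      · exact Real.rpow_le_rpow_of_nonpos (by positivity) (supNormNat_add_one_le_jap x) hr
      · exact absurd ((supNormNat_add_one_le_jap x).trans hx) hk
      · positivity
      · rfl)
    (hweight ▸ hsum)
  refine ⟨hGsum, hGle.trans ?_⟩
  rw [hweight, show (d : ℝ) + r = (d : ℝ) - 1 + r + 1 by ring]
  gcongr

theorem exists_tsum_jap_rpow_far_le {r : ℝ} (hd : d ≠ 0) (hr : r < -d) :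
    ∃ C > 0, ∀ M > 0,
      Summable (fun x : Fin d → ℤ => if M < jap x then jap x ^ r else 0) ∧
        ∑' x : Fin d → ℤ, (if M < jap x then jap x ^ r else 0) ≤ C * M ^ (d + r) := by
  set s := 1 - d - r
  have hs : 1 < s := by simp only [s]; linarith
  have hdpos : (0 : ℝ) < d := by positivity
  refine ⟨d * 2 ^ d * (s / (s - 1)) / (d : ℝ) ^ ((d : ℝ) + r),
    div_pos (mul_pos (by positivity) (div_pos (by linarith) (by linarith))) (by positivity),
    fun M hM => ?_⟩
  have hweight : (fun k : ℕ => ((k : ℝ) + 1) ^ ((d : ℝ) - 1) *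
      if M / d < (k : ℝ) + 1 then ((k : ℝ) + 1) ^ r else 0) =
      fun k : ℕ => if M / d < (k : ℝ) + 1 then ((k : ℝ) + 1) ^ (-s) else 0 := by
    ext k
    split_ifs
    · rw [← Real.rpow_add (by positivity)]; congr 1; simp only [s]; ring
    · simp
  obtain ⟨hsum, hle⟩ := summable_and_tsum_ite_lt_rpow_le hs (div_pos hM hdpos)
  obtain ⟨hGsum, hGle⟩ := summable_and_tsum_le_of_le_supNormNat hd
    (g := fun k : ℕ => if M / d < (k : ℝ) + 1 then ((k : ℝ) + 1) ^ r else 0)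
    (G := fun x => if M < jap x then jap x ^ r else 0)
    (fun x => by split_ifs; exacts [(jap_rpow_pos x r).le, le_rfl])
    (fun k => by split_ifs <;> positivity)
    (fun x => by
      have hjap := jap_le_mul_supNormNat_add_one hd x
      split_ifs with hx hk hk
      · exact Real.rpow_le_rpow_of_nonpos (by positivity) (supNormNat_add_one_le_jap x)
          (by linarith)
      · exact absurd ((div_lt_iff₀' hdpos).2 (hx.trans_le hjap)) hk
      · positivity
      · rfl)
    (hweight ▸ hsum)
  refine ⟨hGsum, hGle.trans ?_⟩
  rw [hweight]
  calc _ ≤ d * 2 ^ d * (s / (s - 1) * (M / d) ^ (1 - s)) := by gcongr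
    _ = _ := by
        rw [show 1 - s = d + r by simp only [s]; ring, Real.div_rpow hM.le hdpos.le]
        ring

lemma rpow_mul_rpow_le_half_rpow_mul_add {N r u v : ℝ} (hN : 0 < N) (hu : 0 < u) (hv : 0 < v)
    (huv : N ≤ u + v) (hr : r ≤ 0) : u ^ r * v ^ r ≤ (N / 2) ^ r * (u ^ r + v ^ r) := by
  wlog h : u ≤ v generalizing u v
  · rw [mul_comm, add_comm]; exact this hv hu (by linarith) (by linarith)
  have hv' : v ^ r ≤ (N / 2) ^ r := Real.rpow_le_rpow_of_nonpos (by positivity) (by linarith) hr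
  have := Real.rpow_pos_of_pos hu r
  have := Real.rpow_pos_of_pos hv r
  nlinarith

noncomputable def nearFarBound (ρ r t : ℝ) : ℝ := if t ≤ ρ then ρ ^ r * t ^ r else t ^ (2 * r)

lemma rpow_mul_rpow_le_nearFarBound {ρ r u v : ℝ} (hu : 0 < u) (hv : 0 < v) (huv : 2 * ρ ≤ u + v)
    (hr : r ≤ 0) : u ^ r * v ^ r ≤ nearFarBound ρ r u + nearFarBound ρ r v := by
  wlog h : u ≤ v generalizing u v
  · rw [mul_comm, add_comm]; exact this hv hu (by linarith) (by linarith)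
  have hu' := Real.rpow_pos_of_pos hu r
  have hv' := Real.rpow_pos_of_pos hv r
  have hsq {t : ℝ} (ht : 0 < t) : t ^ (2 * r) = (t ^ r) ^ 2 := by
    rw [mul_comm, ← Real.rpow_mul_natCast ht.le]; norm_num
  by_cases hnear : u ≤ ρ
  · have hvρ : v ^ r ≤ ρ ^ r := Real.rpow_le_rpow_of_nonpos (by linarith) (by linarith) hr
    have hfar : 0 ≤ nearFarBound ρ r v := by
      unfold nearFarBound; split_ifs
      · exact mul_nonneg (Real.rpow_nonneg (by linarith) r) hv'.le
      · positivity
    rw [nearFarBound, if_pos hnear]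
    nlinarith
  · rw [nearFarBound, nearFarBound, if_neg hnear, if_neg (by linarith), hsq hu, hsq hv]
    nlinarith [sq_nonneg (u ^ r - v ^ r)]

theorem exists_tsum_nearFarBound_jap_le {r : ℝ} (hr : r ≤ 0) (hdr : 0 ≤ (d : ℝ) - 1 + r)
    (hr2 : 2 * r < -d) :
    ∃ C > 0, ∀ ρ > 0, Summable (fun x : Fin d → ℤ => nearFarBound ρ r (jap x)) ∧
      ∑' x : Fin d → ℤ, nearFarBound ρ r (jap x) ≤ C * ρ ^ (d + 2 * r) := by
  have hd : d ≠ 0 := by rintro rfl; norm_num at hdr; linarith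
  obtain ⟨C, hC, hfar⟩ := exists_tsum_jap_rpow_far_le hd hr2
  refine ⟨d * 2 ^ d + C, by positivity, fun ρ hρ => ?_⟩
  obtain ⟨hsnear, htnear⟩ := summable_and_tsum_jap_rpow_near_le (d := d) hr hdr hρ
  obtain ⟨hsfar, htfar⟩ := hfar ρ hρ
  have hsplit : (fun x : Fin d → ℤ => nearFarBound ρ r (jap x)) = fun x =>
      ρ ^ r * (if jap x ≤ ρ then jap x ^ r else 0) + if ρ < jap x then jap x ^ (2 * r) else 0 := by
    ext x
    unfold nearFarBound
    split_ifs <;> first | (exfalso; linarith) | simp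
  rw [hsplit]
  refine ⟨(hsnear.mul_left _).add hsfar, ?_⟩
  rw [(hsnear.mul_left _).tsum_add hsfar, tsum_mul_left]
  calc _ ≤ ρ ^ r * (d * 2 ^ d * ρ ^ (d + r)) + C * ρ ^ (d + 2 * r) := by gcongr
    _ = _ := by
        rw [mul_left_comm, ← Real.rpow_add hρ, show r + (d + r) = d + 2 * r by ring]
        ring

theorem exists_tsum_jap_rpow_mul_jap_rpow_le {r : ℝ} (hr : r ≤ 0) (hdr : 0 ≤ (d : ℝ) - 1 + r)
    (hr2 : 2 * r < -d) :
    ∃ C > 0, ∀ a b : Fin d → ℤ,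
      Summable (fun z => jap (z - a) ^ r * jap (z - b) ^ r) ∧
        ∑' z, jap (z - a) ^ r * jap (z - b) ^ r ≤ C * jap (a - b) ^ (d + 2 * r) := by
  obtain ⟨C, hC, hbound⟩ := exists_tsum_nearFarBound_jap_le hr hdr hr2
  refine ⟨2 * C / 2 ^ ((d : ℝ) + 2 * r), by positivity, fun a b => ?_⟩
  set F := fun x : Fin d → ℤ => nearFarBound (jap (a - b) / 2) r (jap x)
  obtain ⟨hF, htF⟩ := hbound (jap (a - b) / 2) (by linarith [jap_pos (a - b)])
  have hpoint (z : Fin d → ℤ) : jap (z - a) ^ r * jap (z - b) ^ r ≤ F (z - a) + F (z - b) := by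
    refine rpow_mul_rpow_le_nearFarBound (jap_pos _) (jap_pos _) ?_ hr
    have := euclNorm_sub_le_add a b z
    unfold jap; linarith
  have hshift (c : Fin d → ℤ) : Summable (fun z => F (z - c)) ∧ ∑' z, F (z - c) = ∑' x, F x :=
    ⟨(Equiv.subRight c).summable_iff.2 hF, (Equiv.subRight c).tsum_eq F⟩
  have hsum := (hshift a).1.add (hshift b).1
  have hsummable : Summable fun z => jap (z - a) ^ r * jap (z - b) ^ r :=
    .of_nonneg_of_le (fun z => (mul_pos (jap_rpow_pos _ r) (jap_rpow_pos _ r)).le) hpoint hsum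
  refine ⟨hsummable, ?_⟩
  calc _ ≤ ∑' z, (F (z - a) + F (z - b)) := hsummable.tsum_le_tsum hpoint hsum
    _ = 2 * ∑' x, F x := by
        rw [(hshift a).1.tsum_add (hshift b).1, (hshift a).2, (hshift b).2]; ring
    _ ≤ 2 * (C * (jap (a - b) / 2) ^ (d + 2 * r)) := by gcongr
    _ = _ := by rw [Real.div_rpow (jap_pos _).le zero_le_two]; ring

theorem exists_tsum_jap_rpow_mul_jap_rpow_mul_jap_rpow_le {r : ℝ} (hr : r ≤ 0)
    (hdr : 0 ≤ (d : ℝ) - 1 + r) (hr2 : 2 * r < -d) :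
    ∃ C > 0, ∀ N > 0, ∀ v₁ v₂ w : Fin d → ℤ, N ≤ jap (v₂ - w) →
      Summable (fun z => jap (z - v₁) ^ r * jap (z - v₂) ^ r * jap (z - w) ^ r) ∧
        ∑' z, jap (z - v₁) ^ r * jap (z - v₂) ^ r * jap (z - w) ^ r ≤
          C * N ^ r * (jap (v₁ - w) ^ (d + 2 * r) + jap (v₁ - v₂) ^ (d + 2 * r)) := by
  obtain ⟨C, hC, hpair⟩ := exists_tsum_jap_rpow_mul_jap_rpow_le hr hdr hr2
  refine ⟨C / 2 ^ r, by positivity, fun N hN v₁ v₂ w hNvw => ?_⟩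
  set K := fun x : Fin d → ℤ => jap x ^ r
  obtain ⟨hs₁₂, ht₁₂⟩ := hpair v₁ v₂
  obtain ⟨hs₁w, ht₁w⟩ := hpair v₁ w
  have hpoint (z : Fin d → ℤ) : K (z - v₁) * K (z - v₂) * K (z - w) ≤
      (N / 2) ^ r * (K (z - v₁) * K (z - v₂) + K (z - v₁) * K (z - w)) := by
    have hsplit := rpow_mul_rpow_le_half_rpow_mul_add hN (jap_pos (z - v₂)) (jap_pos (z - w))
      (by have := euclNorm_sub_le_add v₂ w z; unfold jap at hNvw ⊢; linarith) hr
    calc _ = K (z - v₁) * (K (z - v₂) * K (z - w)) := by ring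
      _ ≤ K (z - v₁) * ((N / 2) ^ r * (K (z - v₂) + K (z - w))) :=
          mul_le_mul_of_nonneg_left hsplit (jap_rpow_pos _ _).le
      _ = _ := by ring
  have hsum := (hs₁₂.add hs₁w).mul_left ((N / 2) ^ r)
  have hsummable := Summable.of_nonneg_of_le (fun z => (mul_pos (mul_pos (jap_rpow_pos _ _)
    (jap_rpow_pos _ _)) (jap_rpow_pos _ _)).le) hpoint hsum
  refine ⟨hsummable, ?_⟩
  calc _ ≤ ∑' z, (N / 2) ^ r * (K (z - v₁) * K (z - v₂) + K (z - v₁) * K (z - w)) :=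
        hsummable.tsum_le_tsum hpoint hsum
    _ = (N / 2) ^ r * (∑' z, K (z - v₁) * K (z - v₂) + ∑' z, K (z - v₁) * K (z - w)) := by
        rw [tsum_mul_left, hs₁₂.tsum_add hs₁w]
    _ ≤ (N / 2) ^ r * (C * jap (v₁ - v₂) ^ (d + 2 * r) + C * jap (v₁ - w) ^ (d + 2 * r)) := by
        gcongr
    _ = _ := by rw [Real.div_rpow hN.le zero_le_two]; ring

end

theorem stmt8 (d : ℕ) (hd : 7 ≤ d) :
    ∃ C : ℝ, 0 < C ∧
      ∀ N : ℝ, 1 ≤ N →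
        ∀ v₁ v₂ w : Fin d → ℤ, N ≤ euclNorm (v₂ - w) →
          Summable (fun z : Fin d → ℤ =>
              jap (z - v₁) ^ (2 - (d : ℝ)) * jap (z - v₂) ^ (2 - (d : ℝ)) *
                jap (z - w) ^ (2 - (d : ℝ))) ∧
            (∑' z : Fin d → ℤ,
                jap (z - v₁) ^ (2 - (d : ℝ)) * jap (z - v₂) ^ (2 - (d : ℝ)) *
                  jap (z - w) ^ (2 - (d : ℝ))) ≤
              C * N ^ (2 - (d : ℝ)) *
                (jap (v₁ - w) ^ (4 - (d : ℝ)) + jap (v₁ - v₂) ^ (4 - (d : ℝ))) := by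
  have hdR : (7 : ℝ) ≤ d := by exact_mod_cast hd
  obtain ⟨C, hC, hbound⟩ := exists_tsum_jap_rpow_mul_jap_rpow_mul_jap_rpow_le (d := d)
    (r := 2 - d) (by linarith) (by linarith) (by linarith)
  refine ⟨C, hC, fun N hN v₁ v₂ w hNvw => ?_⟩
  have := hbound N (by linarith) v₁ v₂ w (by unfold jap; linarith)
  rwa [show (d : ℝ) + 2 * (2 - d) = 4 - d by ring] at this
end

section
/- Let d ≥ 3 be an integer. There exists a constant C = C(d) > 0 such that for every real m ≥ 1 and all y, z ∈ ℤ^d: ∑_{z' ∈ ∂B_y(m)} ⟨z−z'⟩^(2−d) ≤ C · m. -/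
/-!
Every point of `∂B_y(m)` lies on one of the `2d` faces `{x | x j = y j ± ⌊m⌋}` of the box. On the
face orthogonal to `j`, bound `⟨z - x⟩` below by `L + 1`, where `L` is the sup-distance between `z`
and `x` over the coordinates other than `j`. At most `2(d-1)(2L+1)^(d-2)` points of the face sit at
level `L`, so each level contributes at most `2(d-1)3^(d-2)`, and since the face has side `2⌊m⌋`,
only `2⌊m⌋ + 1` consecutive levels occur.
-/

open Finset

lemma tsum_subtype_le_sum_of_subset {α : Type*} {f : α → ℝ} (hf : ∀ a, 0 ≤ f a) {s : Set α}
    {F : Finset α} (hsF : s ⊆ F) : ∑' x : s, f x ≤ ∑ x ∈ F, f x := by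
  classical
  rw [_root_.tsum_subtype,
    tsum_eq_sum (s := F) fun x hx => Set.indicator_of_notMem (fun h => hx (hsF h)) f]
  exact sum_le_sum fun x _ => Set.indicator_le_self' (fun x _ => hf x) x

lemma sum_biUnion_le_sum_sum {ι α : Type*} [DecidableEq α] {f : α → ℝ} (hf : ∀ a, 0 ≤ f a)
    (s : Finset ι) (t : ι → Finset α) :
    ∑ x ∈ s.biUnion t, f x ≤ ∑ i ∈ s, ∑ x ∈ t i, f x := by
  classical
  induction s using Finset.induction with
  | empty => simp
  | insert a s ha ih =>
    rw [biUnion_insert, sum_insert ha]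
    have hinter : 0 ≤ ∑ x ∈ t a ∩ s.biUnion t, f x := sum_nonneg fun x _ => hf x
    linarith [sum_union_inter (s₁ := t a) (s₂ := s.biUnion t) (f := f)]

section Lattice

variable {d : ℕ}

lemma euclNorm_nonneg (x : Fin d → ℤ) : 0 ≤ euclNorm x := Real.sqrt_nonneg _

lemma natAbs_le_euclNorm (x : Fin d → ℤ) (i : Fin d) : ((x i).natAbs : ℝ) ≤ euclNorm x := by
  rw [Nat.cast_natAbs, Int.cast_abs, ← Real.sqrt_sq_eq_abs]
  exact Real.sqrt_le_sqrt <|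
    single_le_sum (f := fun k => ((x k : ℝ)) ^ 2) (fun k _ => sq_nonneg _) (mem_univ i)

def supNormExcept (j : Fin d) (x : Fin d → ℤ) : ℕ :=
  (univ.erase j).sup fun i => (x i).natAbs

lemma supNormExcept_le_euclNorm (j : Fin d) (x : Fin d → ℤ) :
    (supNormExcept j x : ℝ) ≤ euclNorm x :=
  sup_induction (p := fun n : ℕ => (n : ℝ) ≤ euclNorm x) (by simpa using euclNorm_nonneg x)
    (fun a ha b hb => by simpa using And.intro ha hb) fun i _ => natAbs_le_euclNorm x i

lemma jap_rpow_le_supNormExcept {p : ℝ} (hp : p ≤ 0) (j : Fin d) (x : Fin d → ℤ) :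
    jap x ^ p ≤ ((supNormExcept j x : ℝ) + 1) ^ p :=
  Real.rpow_le_rpow_of_nonpos (by positivity)
    (by unfold jap; linarith [supNormExcept_le_euclNorm j x]) hp

noncomputable def faceBox (j : Fin d) (c : ℤ) (lo hi : Fin d → ℤ) : Finset (Fin d → ℤ) :=
  Fintype.piFinset fun i => if i = j then {c} else Icc (lo i) (hi i)

lemma mem_faceBox {j : Fin d} {c : ℤ} {lo hi x : Fin d → ℤ} :
    x ∈ faceBox j c lo hi ↔ x j = c ∧ ∀ i, i ≠ j → lo i ≤ x i ∧ x i ≤ hi i := by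
  simp only [faceBox, Fintype.mem_piFinset]
  constructor
  · intro h
    refine ⟨by simpa using h j, fun i hi => ?_⟩
    simpa [hi] using h i
  · rintro ⟨hj, h⟩ i
    by_cases hi : i = j
    · subst hi; simpa using hj
    · simpa [hi] using h i hi

noncomputable def shellExcept (j : Fin d) (c : ℤ) (z : Fin d → ℤ) (L : ℕ) : Finset (Fin d → ℤ) :=
  (univ.erase j).biUnion fun i₀ => Fintype.piFinset fun i =>
    if i = j then {c} else if i = i₀ then {z i - L, z i + L} else Icc (z i - L) (z i + L)

lemma card_shellExcept_le (j : Fin d) (c : ℤ) (z : Fin d → ℤ) (L : ℕ) :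
    #(shellExcept j c z L) ≤ 2 * (d - 1) * (2 * L + 1) ^ (d - 2) := by
  have hcard : #(univ.erase j) = d - 1 := by simp
  calc #(shellExcept j c z L) ≤ #(univ.erase j) * (2 * (2 * L + 1) ^ (d - 2)) := by
        refine card_biUnion_le_card_mul _ _ _ fun i₀ hi₀ => ?_
        have hij : i₀ ≠ j := (mem_erase.mp hi₀).1
        rw [Fintype.card_piFinset, ← mul_prod_erase univ _ (mem_univ j),
          ← mul_prod_erase (univ.erase j) _ hi₀]
        have hrest : ∀ i ∈ (univ.erase j).erase i₀,
            #(if i = j then {c} else if i = i₀ then {z i - L, z i + L}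
              else Icc (z i - L) (z i + L)) = 2 * L + 1 := by
          intro i hi
          obtain ⟨hii₀, hij'⟩ : i ≠ i₀ ∧ i ≠ j := by simpa using hi
          simp only [hij', hii₀, if_false, Int.card_Icc]
          omega
        rw [prod_congr rfl hrest, prod_const, card_erase_of_mem hi₀, hcard]
        simp only [if_true, card_singleton, one_mul, hij, if_false]
        exact Nat.mul_le_mul_right _ (card_le_two.trans_eq rfl)
    _ = 2 * (d - 1) * (2 * L + 1) ^ (d - 2) := by rw [hcard]; ring

lemma mem_shellExcept (hd : 2 ≤ d) {j : Fin d} {c : ℤ} {z x : Fin d → ℤ} (hx : x j = c) :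
    x ∈ shellExcept j c z (supNormExcept j (z - x)) := by
  have hne : (univ.erase j).Nonempty := by
    rw [← card_pos, card_erase_of_mem (mem_univ j), card_univ, Fintype.card_fin]; omega
  obtain ⟨i₀, hi₀, hmax⟩ := exists_mem_eq_sup (univ.erase j) hne fun i => ((z - x) i).natAbs
  have hle : ∀ i ∈ univ.erase j, ((z - x) i).natAbs ≤ supNormExcept j (z - x) :=
    fun i hi => le_sup (f := fun i => ((z - x) i).natAbs) hi
  simp only [shellExcept, mem_biUnion, Fintype.mem_piFinset]
  refine ⟨i₀, hi₀, fun i => ?_⟩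
  by_cases hij : i = j
  · simp [hij, hx]
  by_cases hii₀ : i = i₀
  · subst hii₀
    have : ((z - x) i).natAbs = supNormExcept j (z - x) := hmax.symm
    simp only [hij, if_false, if_true, mem_insert, mem_singleton, Pi.sub_apply] at this ⊢
    omega
  · have := hle i (mem_erase.mpr ⟨hij, mem_univ i⟩)
    simp only [hij, hii₀, if_false, mem_Icc, Pi.sub_apply] at this ⊢
    omega

lemma supNormExcept_mem_Icc_of_mem_faceBox {j : Fin d} {c : ℤ} {lo hi x : Fin d → ℤ} {K : ℕ}
    (hK : ∀ i, hi i - lo i ≤ K) (hx : x ∈ faceBox j c lo hi) (z : Fin d → ℤ) :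
    supNormExcept j (z - x) ∈ Icc (supNormExcept j (z - fun i => max (lo i) (min (z i) (hi i))))
      (supNormExcept j (z - fun i => max (lo i) (min (z i) (hi i))) + K) := by
  set p : Fin d → ℤ := fun i => max (lo i) (min (z i) (hi i))
  have hbox := (mem_faceBox.mp hx).2
  refine mem_Icc.mpr ⟨sup_mono_fun fun i hi => ?_, Finset.sup_le fun i hi => ?_⟩
  · have := hbox i (mem_erase.mp hi).1
    have := hK i
    simp only [p, Pi.sub_apply]
    omega
  · have := hbox i (mem_erase.mp hi).1
    have := hK i
    have hp : ((z - p) i).natAbs ≤ supNormExcept j (z - p) :=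
      le_sup (f := fun i => ((z - p) i).natAbs) hi
    simp only [p, Pi.sub_apply] at hp ⊢
    omega

lemma two_mul_add_one_pow_mul_rpow_le (hd : 2 ≤ d) (L : ℕ) :
    ((2 * L + 1 : ℕ) : ℝ) ^ (d - 2) * ((L : ℝ) + 1) ^ (2 - (d : ℝ)) ≤ 3 ^ (d - 2) := by
  have hL : (0 : ℝ) < L + 1 := by positivity
  have hcancel : ((L : ℝ) + 1) ^ (d - 2) * ((L : ℝ) + 1) ^ (2 - (d : ℝ)) = 1 := by
    rw [← Real.rpow_natCast, ← Real.rpow_add hL, Nat.cast_sub hd]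
    norm_num
  calc ((2 * L + 1 : ℕ) : ℝ) ^ (d - 2) * ((L : ℝ) + 1) ^ (2 - (d : ℝ))
      ≤ (3 * ((L : ℝ) + 1)) ^ (d - 2) * ((L : ℝ) + 1) ^ (2 - (d : ℝ)) := by
        gcongr
        push_cast
        linarith
    _ = 3 ^ (d - 2) := by rw [mul_pow, mul_assoc, hcancel, mul_one]

lemma sum_faceBox_jap_rpow_le (hd : 2 ≤ d) (z lo hi : Fin d → ℤ) (j : Fin d) (c : ℤ) (K : ℕ)
    (hK : ∀ i, hi i - lo i ≤ K) :
    ∑ x ∈ faceBox j c lo hi, jap (z - x) ^ (2 - (d : ℝ))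
      ≤ (2 * (d - 1) * 3 ^ (d - 2) : ℕ) * ((K : ℝ) + 1) := by
  set g : (Fin d → ℤ) → ℕ := fun x => supNormExcept j (z - x)
  set L₀ := supNormExcept j (z - fun i => max (lo i) (min (z i) (hi i)))
  have hmaps : ∀ x ∈ faceBox j c lo hi, g x ∈ Icc L₀ (L₀ + K) :=
    fun x hx => supNormExcept_mem_Icc_of_mem_faceBox hK hx z
  have hlevel : ∀ L, (#{x ∈ faceBox j c lo hi | g x = L} : ℝ) * ((L : ℝ) + 1) ^ (2 - (d : ℝ))
      ≤ (2 * (d - 1) * 3 ^ (d - 2) : ℕ) := by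
    intro L
    have hcard : #{x ∈ faceBox j c lo hi | g x = L} ≤ 2 * (d - 1) * (2 * L + 1) ^ (d - 2) := by
      refine (card_le_card fun x hx => ?_).trans (card_shellExcept_le j c z L)
      obtain ⟨hxF, rfl⟩ := mem_filter.mp hx
      exact mem_shellExcept hd (mem_faceBox.mp hxF).1
    calc (#{x ∈ faceBox j c lo hi | g x = L} : ℝ) * ((L : ℝ) + 1) ^ (2 - (d : ℝ))
        ≤ (2 * (d - 1) * (2 * L + 1) ^ (d - 2) : ℕ) * ((L : ℝ) + 1) ^ (2 - (d : ℝ)) := by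
          gcongr
      _ = (2 * (d - 1) : ℕ) *
            (((2 * L + 1 : ℕ) : ℝ) ^ (d - 2) * ((L : ℝ) + 1) ^ (2 - (d : ℝ))) := by
          push_cast; ring
      _ ≤ (2 * (d - 1) : ℕ) * 3 ^ (d - 2) := by
          gcongr; exact two_mul_add_one_pow_mul_rpow_le hd L
      _ = (2 * (d - 1) * 3 ^ (d - 2) : ℕ) := by push_cast; ring
  calc ∑ x ∈ faceBox j c lo hi, jap (z - x) ^ (2 - (d : ℝ))
      ≤ ∑ x ∈ faceBox j c lo hi, ((g x : ℝ) + 1) ^ (2 - (d : ℝ)) :=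
        sum_le_sum fun x _ => jap_rpow_le_supNormExcept (by simp; exact_mod_cast hd) j (z - x)
    _ = ∑ L ∈ Icc L₀ (L₀ + K),
          ∑ x ∈ faceBox j c lo hi with g x = L, ((g x : ℝ) + 1) ^ (2 - (d : ℝ)) :=
        (sum_fiberwise_of_maps_to hmaps _).symm
    _ = ∑ L ∈ Icc L₀ (L₀ + K),
          (#{x ∈ faceBox j c lo hi | g x = L} : ℝ) * ((L : ℝ) + 1) ^ (2 - (d : ℝ)) := by
        refine sum_congr rfl fun L _ => ?_
        rw [sum_congr rfl fun x hx => by rw [(mem_filter.mp hx).2], sum_const, nsmul_eq_mul]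
    _ ≤ ∑ L ∈ Icc L₀ (L₀ + K), ((2 * (d - 1) * 3 ^ (d - 2) : ℕ) : ℝ) :=
        sum_le_sum fun L _ => hlevel L
    _ = (2 * (d - 1) * 3 ^ (d - 2) : ℕ) * ((K : ℝ) + 1) := by
        rw [sum_const, Nat.card_Icc, nsmul_eq_mul, mul_comm,
          show L₀ + K + 1 - L₀ = K + 1 by omega]
        push_cast
        ring

lemma mem_latBox_iff {m : ℝ} (hm : 0 ≤ m) {x y : Fin d → ℤ} :
    x ∈ latBox y m ↔ ∀ i, (x i - y i).natAbs ≤ ⌊m⌋₊ := by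
  simp only [latBox, supNorm, Set.mem_ofPred_eq, ← Nat.le_floor_iff hm, Finset.sup_le_iff,
    mem_univ, true_implies, Pi.sub_apply]

lemma exists_natAbs_eq_floor_of_mem_latBdry {m : ℝ} (hm : 0 ≤ m) {x y : Fin d → ℤ}
    (hx : x ∈ latBdry y m) : ∃ j, (x j - y j).natAbs = ⌊m⌋₊ := by
  obtain ⟨hxB, x', hx'B, hxx'⟩ := hx
  rw [mem_latBox_iff hm] at hxB hx'B
  push Not at hx'B
  obtain ⟨j, hj⟩ := hx'B
  have hstep : |x j - x' j| ≤ 1 :=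
    hxx' ▸ single_le_sum (f := fun i => |x i - x' i|) (fun i _ => abs_nonneg _) (mem_univ j)
  have := abs_le.mp hstep
  have := hxB j
  exact ⟨j, by omega⟩

lemma latBdry_subset_biUnion_faceBox {m : ℝ} (hm : 0 ≤ m) (y : Fin d → ℤ) :
    latBdry y m ⊆ ↑(univ.biUnion fun p : Fin d × ℤˣ =>
      faceBox p.1 (y p.1 + p.2 * ⌊m⌋₊) (fun i => y i - ⌊m⌋₊) (fun i => y i + ⌊m⌋₊)) := by
  intro x hx
  obtain ⟨j, hj⟩ := exists_natAbs_eq_floor_of_mem_latBdry hm hx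
  have hbox := (mem_latBox_iff hm).mp hx.1
  have hface : ∀ i, i ≠ j → y i - ⌊m⌋₊ ≤ x i ∧ x i ≤ y i + ⌊m⌋₊ := fun i _ => by
    have := hbox i; omega
  simp only [coe_biUnion, coe_univ, Set.mem_univ, Set.iUnion_true, Set.mem_iUnion,
    Prod.exists, mem_coe, mem_faceBox]
  rcases Int.natAbs_eq (x j - y j) with h | h
  · exact ⟨j, 1, by simp; omega, hface⟩
  · exact ⟨j, -1, by simp; omega, hface⟩

end Lattice

theorem stmt10 (d : ℕ) (hd : 3 ≤ d) :
    ∃ C : ℝ, 0 < C ∧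
      ∀ m : ℝ, 1 ≤ m →
        ∀ y z : Fin d → ℤ,
          (∑' z' : ↥(latBdry y m), jap (z - (z' : Fin d → ℤ)) ^ (2 - (d : ℝ))) ≤ C * m := by
  set C₀ : ℝ := ((2 * (d - 1) * 3 ^ (d - 2) : ℕ) : ℝ)
  have hC₀ : 0 < C₀ := by
    have : 0 < d - 1 := by omega
    positivity
  refine ⟨2 * d * C₀ * 3, by positivity, fun m hm y z => ?_⟩
  set M := ⌊m⌋₊
  have hM : (M : ℝ) ≤ m := Nat.floor_le (by linarith)
  have hf : ∀ x : Fin d → ℤ, 0 ≤ jap (z - x) ^ (2 - (d : ℝ)) :=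
    fun x => (Real.rpow_pos_of_pos (jap_pos _) _).le
  calc ∑' x : ↥(latBdry y m), jap (z - (x : Fin d → ℤ)) ^ (2 - (d : ℝ))
      ≤ ∑ p : Fin d × ℤˣ, ∑ x ∈ faceBox p.1 (y p.1 + p.2 * M) (fun i => y i - M)
          (fun i => y i + M), jap (z - x) ^ (2 - (d : ℝ)) :=
        (tsum_subtype_le_sum_of_subset hf (latBdry_subset_biUnion_faceBox (by linarith) y)).trans
          (sum_biUnion_le_sum_sum hf _ _)
    _ ≤ ∑ _p : Fin d × ℤˣ, C₀ * (((2 * M : ℕ) : ℝ) + 1) :=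
        sum_le_sum fun p _ => sum_faceBox_jap_rpow_le (by omega) z _ _ p.1 _ (2 * M)
          fun i => by push_cast; omega
    _ = 2 * d * C₀ * (2 * M + 1) := by simp [Fintype.card_units_int]; ring
    _ ≤ 2 * d * C₀ * (3 * m) := by gcongr; linarith
    _ = 2 * d * C₀ * 3 * m := by ring
end
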